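/- Under Condition 1, if the exploration length satisfies T1 ≥ |U_E|, then for all S_i ≠ S_j ∈ U_E the ATE estimator produced by UCB-TSN satisfies E[|Δ̂_T^{(i,j)} − Δ^{(i,j)}|] ≤ 2·√(4·log(T1·|U_E|)/⌊T1/|U_E|⌋) + 1/T1; in particular E[|Δ̂_T^{(i,j)} − Δ^{(i,j)}|] = Õ(√(|U_E|/T1)). -/

import Mathlib

open MeasureTheory Finset

namespace MABN

/-- A super arm: an assignment of one of `K` arms to each of `N` units. -/
abbrev SuperArm (N K : ℕ) := Fin N → Fin K

/-- A bandit instance: potential outcomes `Y_i(A) ∈ [0,1]` for each unit `i` and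
super arm `A`. -/
structure BanditInstance (N K : ℕ) where
  Y : SuperArm N K → Fin N → ℝ
  Y_mem : ∀ A i, Y A i ∈ Set.Icc (0 : ℝ) 1

section Defs

variable {N K : ℕ} {E : Type} [Fintype E] [DecidableEq E] {Ω : Type} [MeasurableSpace Ω]

/-- The exposure super arm `(S(i, A, H))_{i ∈ [N]}` induced by super arm `A`. -/
def expArm (Smap : Fin N → SuperArm N K → E) (A : SuperArm N K) : Fin N → E :=
  fun i => Smap i A

/-- `U_O`: exposure super arms realizable by some super arm. -/
def UO (Smap : Fin N → SuperArm N K → E) : Finset (Fin N → E) :=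
  Finset.image (expArm Smap) Finset.univ

/-- `U_C`: cluster-wise switchback exposure super arms of the clustering `Cl`. -/
def UC {c : ℕ} (Cl : Fin N → Fin c) : Finset (Fin N → E) :=
  Finset.univ.filter fun S => ∀ i j, Cl i = Cl j → S i = S j

/-- `U_E = U_C ∩ U_O`. -/
def UE (Smap : Fin N → SuperArm N K → E) {c : ℕ} (Cl : Fin N → Fin c) :
    Finset (Fin N → E) := UC Cl ∩ UO Smap

/-- Super arms compatible with a given exposure super arm. -/
def compat (Smap : Fin N → SuperArm N K → E) (S : Fin N → E) : Finset (SuperArm N K) :=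
  Finset.univ.filter fun A => expArm Smap A = S

/-- Exposure potential outcome `Ỹ_i(S)`: the average of `Y_i(A)` over super arms
compatible with `S` (compatible super arms are sampled uniformly). -/
noncomputable def tildeY (ν : BanditInstance N K) (Smap : Fin N → SuperArm N K → E)
    (i : Fin N) (S : Fin N → E) : ℝ :=
  (∑ A ∈ compat Smap S, ν.Y A i) / (compat Smap S).card

/-- Unit-averaged exposure potential outcome `(1/N) ∑_i Ỹ_i(S)`. -/
noncomputable def mS (ν : BanditInstance N K) (Smap : Fin N → SuperArm N K → E)
    (S : Fin N → E) : ℝ :=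
  (1 / (N : ℝ)) * ∑ i, tildeY ν Smap i S

/-- ATE between exposure super arms:
`Δ^{(i,j)} = (1/N) ∑_{i'} (Ỹ_{i'}(S_i) − Ỹ_{i'}(S_j))`. -/
noncomputable def ate (ν : BanditInstance N K) (Smap : Fin N → SuperArm N K → E)
    (Si Sj : Fin N → E) : ℝ :=
  (1 / (N : ℝ)) * ∑ i, (tildeY ν Smap i Si - tildeY ν Smap i Sj)

/-- Unit-averaged realized reward `(1/N) ∑_i r_{i,t}` at round `t`. -/
noncomputable def avgRew (r : ℕ → Fin N → Ω → ℝ) (t : ℕ) (ω : Ω) : ℝ :=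
  (1 / (N : ℝ)) * ∑ i, r t i ω

/-- `N_S^t`: number of times exposure super arm `S` was played in the first `t` rounds. -/
def cnt (Sel : ℕ → Ω → Fin N → E) (S : Fin N → E) (t : ℕ) (ω : Ω) : ℕ :=
  ((Finset.range t).filter fun τ => Sel τ ω = S).card

/-- `R̂_t(S)`: empirical mean of the unit-averaged exposure rewards over the rounds
(among the first `t`) in which `S` was played. -/
noncomputable def empMean (Sel : ℕ → Ω → Fin N → E) (r : ℕ → Fin N → Ω → ℝ)
    (t : ℕ) (S : Fin N → E) (ω : Ω) : ℝ :=
  (∑ τ ∈ (Finset.range t).filter (fun τ => Sel τ ω = S), avgRew r τ ω) /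
    (cnt Sel S t ω : ℝ)

/-- `UCB_{t,S} = R̂_t(S) + √(9 log(1/δ) / N_S^t)`. -/
noncomputable def ucbIdx (Sel : ℕ → Ω → Fin N → E) (r : ℕ → Fin N → Ω → ℝ)
    (δ : ℝ) (t : ℕ) (S : Fin N → E) (ω : Ω) : ℝ :=
  empMean Sel r t S ω + Real.sqrt (9 * Real.log (1 / δ) / (cnt Sel S t ω : ℝ))

/-- The σ-algebra generated by the history of the first `t` rounds (all selected
exposure super arms and all units' rewards). -/
def histσ [MeasurableSpace E] (Sel : ℕ → Ω → Fin N → E) (r : ℕ → Fin N → Ω → ℝ)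
    (t : ℕ) : MeasurableSpace Ω :=
  ⨆ τ ∈ Finset.range t,
    MeasurableSpace.comap (fun ω => (Sel τ ω, fun i => r τ i ω)) inferInstance

end Defs

/-- A run of the **UCB-TSN** algorithm on an MAB-N instance, modelled as a stochastic
process `(Sel_t, r_t)` on a probability space `(Ω, μ)` satisfying the defining rules
of the algorithm: Condition 1 (`2 ≤ |U_E| ≤ T`); round-robin play of `U_E` during the
exploration phase `t < T1`; UCB maximization with confidence parameter `δ` during the
second phase `T1 ≤ t < T`; and unit-averaged exposure rewards that are, conditionally
on the history and the current selection, sub-Gaussian around the exposure potential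
outcome `(1/N) ∑_i Ỹ_i(S_t)` with variance proxy at most `2`. -/
structure UCBTSN (N K nc : ℕ) (E : Type) [Fintype E] [DecidableEq E] [MeasurableSpace E]
    (Ω : Type) [MeasurableSpace Ω] where
  ν : BanditInstance N K
  Smap : Fin N → SuperArm N K → E
  Cl : Fin N → Fin nc
  T : ℕ
  T1 : ℕ
  δ : ℝ
  μ : Measure Ω
  Sel : ℕ → Ω → Fin N → E
  r : ℕ → Fin N → Ω → ℝ
  enum : ℕ → Fin N → E
  hN : 1 ≤ N
  μ_prob : IsProbabilityMeasure μ
  cond1_lo : 2 ≤ (UE Smap Cl).card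
  cond1_hi : (UE Smap Cl).card ≤ T
  hT1T : T1 ≤ T
  hδ : 0 < δ
  meas_Sel : ∀ t, Measurable (Sel t)
  meas_r : ∀ t i, Measurable (r t i)
  int_avg : ∀ t, Integrable (avgRew r t) μ
  int_exp : ∀ (t : ℕ) (m : ℝ), Integrable (fun ω => Real.exp (m * avgRew r t ω)) μ
  enum_mem : ∀ S, S ∈ UE Smap Cl ↔ ∃ j < (UE Smap Cl).card, enum j = S
  enum_inj : ∀ j j', j < (UE Smap Cl).card → j' < (UE Smap Cl).card →
    enum j = enum j' → j = j'
  sel_mem : ∀ t < T, ∀ ω, Sel t ω ∈ UE Smap Cl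
  phase1 : ∀ t < T1, ∀ ω, Sel t ω = enum (t % (UE Smap Cl).card)
  phase2 : ∀ t, T1 ≤ t → t < T → ∀ ω,
    ∀ S ∈ UE Smap Cl, ucbIdx Sel r δ t S ω ≤ ucbIdx Sel r δ t (Sel t ω) ω
  subG : ∀ t < T, ∀ m : ℝ, ∀ᵐ ω ∂μ,
    (μ[fun ω' => Real.exp (m * (avgRew r t ω' - mS ν Smap (Sel t ω'))) |
        histσ Sel r t ⊔ MeasurableSpace.comap (Sel t) inferInstance]) ω
      ≤ Real.exp (m ^ 2)

namespace UCBTSN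

variable {N K nc : ℕ} {E : Type} [Fintype E] [DecidableEq E] [MeasurableSpace E]
  {Ω : Type} [MeasurableSpace Ω]

/-- The ATE estimator output by UCB-TSN: `Δ̂_T^{(i,j)} = R̂_{T1}(S_i) − R̂_{T1}(S_j)`. -/
noncomputable def dHat (R : UCBTSN N K nc E Ω) (Si Sj : Fin N → E) (ω : Ω) : ℝ :=
  empMean R.Sel R.r R.T1 Si ω - empMean R.Sel R.r R.T1 Sj ω

/-- The estimation error `e_ν(T, Δ̂) = max_{S_i, S_j ∈ U_E} E[|Δ^{(i,j)} − Δ̂_T^{(i,j)}|]`. -/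
noncomputable def estErr (R : UCBTSN N K nc E Ω) : ℝ :=
  sSup {x : ℝ | ∃ Si ∈ UE R.Smap R.Cl, ∃ Sj ∈ UE R.Smap R.Cl,
    x = MeasureTheory.integral R.μ (fun ω => |ate R.ν R.Smap Si Sj - R.dHat Si Sj ω|)}

/-- The exposure-based regret
`R_ν(T,π) = (T/N) ∑_i Ỹ_i(S*) − (1/N) E_π[∑_{t∈[T]} ∑_i r̃_{i,t}(S_t)]`,
with `S* = argmax_{S ∈ U_E} ∑_i Ỹ_i(S)`. -/
noncomputable def regret (R : UCBTSN N K nc E Ω) : ℝ :=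
  (R.T : ℝ) * sSup {x : ℝ | ∃ S ∈ UE R.Smap R.Cl, x = mS R.ν R.Smap S}
    - MeasureTheory.integral R.μ (fun ω => ∑ t ∈ Finset.range R.T, avgRew R.r t ω)

end UCBTSN

/-!
Because exploration is a deterministic round robin, `Δ̂ − Δ` is a fixed linear combination
`∑ c_t X_t` of the centred rewards `X_t` of the exploration rounds, with
`∑ c_t² = 1/n_i + 1/n_j ≤ 2/⌊T1/|U_E|⌋`, where `n_i`, `n_j` count the exploration rounds of the
two arms. Conditioning on the history round by round, the
sub-Gaussian hypothesis gives `E[exp (θ ∑ c_t X_t)] ≤ exp (θ² ∑ c_t²)`. Finally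
`|x| ≤ a + e^{-λa-1}/λ · (e^{λx} + e^{-λx})`, with `λ = √(⌊T1/|U_E|⌋ log (T1 |U_E|))` and `a` the
square-root term of the bound, turns this into the bound on `E|Δ̂ − Δ|`, the exponential
remainder being at most `1/T1`.
-/

section SubGaussianSum

variable {Ω : Type*} {mΩ : MeasurableSpace Ω} {μ : Measure Ω}

lemma integral_mul_le_of_condExp_le [IsFiniteMeasure μ] {m : MeasurableSpace Ω} (hm : m ≤ mΩ)
    {G f : Ω → ℝ} {b : ℝ} (hG : StronglyMeasurable[m] G) (hG₀ : 0 ≤ G)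
    (hGint : Integrable G μ) (hf : Integrable f μ) (hGf : Integrable (G * f) μ)
    (hcond : μ[f|m] ≤ᵐ[μ] fun _ => b) :
    ∫ ω, G ω * f ω ∂μ ≤ b * ∫ ω, G ω ∂μ := by
  have hpull := condExp_mul_of_stronglyMeasurable_left hG hGf hf
  calc ∫ ω, G ω * f ω ∂μ = ∫ ω, (μ[G * f|m]) ω ∂μ := (integral_condExp hm).symm
    _ = ∫ ω, G ω * (μ[f|m]) ω ∂μ := integral_congr_ae hpull
    _ ≤ ∫ ω, G ω * b ∂μ := by
        refine integral_mono_ae (integrable_condExp.congr hpull) (hGint.mul_const b) ?_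
        filter_upwards [hcond] with ω hω using mul_le_mul_of_nonneg_left hω (hG₀ ω)
    _ = b * ∫ ω, G ω ∂μ := by rw [integral_mul_const, mul_comm]

variable {X : ℕ → Ω → ℝ} {F : ℕ → MeasurableSpace Ω}

lemma measurable_exp_sum_mul (hX : ∀ τ t, τ < t → Measurable[F t] (X τ))
    (n : ℕ) (c : ℕ → ℝ) :
    Measurable[F n] fun ω => Real.exp (∑ t ∈ range n, c t * X t ω) :=
  Real.measurable_exp.comp <| Finset.measurable_sum _ fun t ht =>
    (hX t n (mem_range.1 ht)).const_mul (c t)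

/-- The induction step dominates `exp (x + y)` by `(exp (2 * x) + exp (2 * y)) / 2`, which is
why the statement is made for all coefficient sequences `c` at once. -/
lemma integrable_exp_sum_mul [IsFiniteMeasure μ] (hF : ∀ t, F t ≤ mΩ)
    (hX : ∀ τ t, τ < t → Measurable[F t] (X τ))
    (hint : ∀ t (m : ℝ), Integrable (fun ω => Real.exp (m * X t ω)) μ) (n : ℕ) (c : ℕ → ℝ) :
    Integrable (fun ω => Real.exp (∑ t ∈ range n, c t * X t ω)) μ := by
  induction n generalizing c with
  | zero => simp
  | succ n ih =>
    refine Integrable.mono' (((ih (2 * c)).add (hint n (2 * c n))).div_const 2)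
      ((measurable_exp_sum_mul hX (n + 1) c).mono (hF _) le_rfl).aestronglyMeasurable
      (.of_forall fun ω => ?_)
    rw [Real.norm_of_nonneg (Real.exp_pos _).le, sum_range_succ, Real.exp_add]
    have key := two_mul_le_add_sq (Real.exp (∑ t ∈ range n, c t * X t ω))
      (Real.exp (c n * X n ω))
    have hsq : ∀ x : ℝ, Real.exp x ^ 2 = Real.exp (2 * x) := fun x => by
      rw [sq, ← Real.exp_add, two_mul]
    simp only [Pi.add_apply, Pi.mul_apply, Pi.ofNat_apply, hsq, mul_sum, ← mul_assoc] at key ⊢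
    linarith

lemma integral_exp_sum_mul_le [IsProbabilityMeasure μ] (hF : ∀ t, F t ≤ mΩ)
    (hX : ∀ τ t, τ < t → Measurable[F t] (X τ))
    (hint : ∀ t (m : ℝ), Integrable (fun ω => Real.exp (m * X t ω)) μ) {s : ℝ} {n : ℕ}
    (hsub : ∀ t < n, ∀ m : ℝ, μ[fun ω => Real.exp (m * X t ω)|F t] ≤ᵐ[μ]
      fun _ => Real.exp (s * m ^ 2)) (c : ℕ → ℝ) :
    ∫ ω, Real.exp (∑ t ∈ range n, c t * X t ω) ∂μ ≤ Real.exp (s * ∑ t ∈ range n, c t ^ 2) := by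
  induction n with
  | zero => simp
  | succ n ih =>
    have hprod : Integrable (fun ω => Real.exp (∑ t ∈ range n, c t * X t ω)
        * Real.exp (c n * X n ω)) μ := by
      simpa only [sum_range_succ, Real.exp_add] using integrable_exp_sum_mul hF hX hint (n + 1) c
    have hstep := integral_mul_le_of_condExp_le (hF n)
      (measurable_exp_sum_mul hX n c).stronglyMeasurable (fun ω => (Real.exp_pos _).le)
      (integrable_exp_sum_mul hF hX hint n c) (hint n (c n)) hprod (hsub n n.lt_succ_self (c n))
    calc ∫ ω, Real.exp (∑ t ∈ range (n + 1), c t * X t ω) ∂μ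
        = ∫ ω, Real.exp (∑ t ∈ range n, c t * X t ω) * Real.exp (c n * X n ω) ∂μ := by
          simp only [sum_range_succ, Real.exp_add]
      _ ≤ Real.exp (s * c n ^ 2) * ∫ ω, Real.exp (∑ t ∈ range n, c t * X t ω) ∂μ := hstep
      _ ≤ Real.exp (s * c n ^ 2) * Real.exp (s * ∑ t ∈ range n, c t ^ 2) :=
          mul_le_mul_of_nonneg_left (ih fun t ht => hsub t (ht.trans n.lt_succ_self))
            (Real.exp_pos _).le
      _ = Real.exp (s * ∑ t ∈ range (n + 1), c t ^ 2) := by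
          rw [← Real.exp_add, sum_range_succ]; ring_nf

lemma abs_le_add_exp_mul_add_exp {lam : ℝ} (hlam : 0 < lam) (x a : ℝ) :
    |x| ≤ a + Real.exp (-(lam * a) - 1) / lam * (Real.exp (lam * x) + Real.exp (-lam * x)) := by
  have hlin : lam * (|x| - a) ≤ Real.exp (lam * (|x| - a) - 1) := by
    linarith [Real.add_one_le_exp (lam * (|x| - a) - 1)]
  have hcosh : Real.exp (lam * |x|) ≤ Real.exp (lam * x) + Real.exp (-lam * x) := by
    rcases abs_cases x with ⟨hx, _⟩ | ⟨hx, _⟩ <;> rw [hx]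
    · exact le_add_of_nonneg_right (Real.exp_pos _).le
    · rw [mul_neg, ← neg_mul]; exact le_add_of_nonneg_left (Real.exp_pos _).le
  have hsplit :
      Real.exp (lam * (|x| - a) - 1) = Real.exp (-(lam * a) - 1) * Real.exp (lam * |x|) := by
    rw [← Real.exp_add]; ring_nf
  calc |x| = a + lam * (|x| - a) / lam := by field_simp; ring
    _ ≤ a + Real.exp (-(lam * a) - 1) * Real.exp (lam * |x|) / lam := by
        rw [← hsplit]; gcongr
    _ ≤ _ := by
        rw [mul_div_right_comm]; gcongr

lemma integral_abs_le_of_integral_exp_le [IsProbabilityMeasure μ] {D : Ω → ℝ} {v lam : ℝ}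
    (a : ℝ) (hlam : 0 < lam) (hint : ∀ θ, Integrable (fun ω => Real.exp (θ * D ω)) μ)
    (hmgf : ∀ θ, ∫ ω, Real.exp (θ * D ω) ∂μ ≤ Real.exp (θ ^ 2 * v)) :
    ∫ ω, |D ω| ∂μ ≤ a + 2 * Real.exp (lam ^ 2 * v - lam * a - 1) / lam := by
  set C := Real.exp (-(lam * a) - 1) / lam
  have hC : 0 ≤ C := by positivity
  have hcosh : Integrable (fun ω => Real.exp (lam * D ω) + Real.exp (-lam * D ω)) μ :=
    (hint lam).add (hint (-lam))
  calc ∫ ω, |D ω| ∂μ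
      ≤ ∫ ω, a + C * (Real.exp (lam * D ω) + Real.exp (-lam * D ω)) ∂μ :=
        integral_mono_of_nonneg (.of_forall fun (ω : Ω) => abs_nonneg (D ω))
          ((integrable_const a).add (hcosh.const_mul C))
          (.of_forall fun (ω : Ω) => abs_le_add_exp_mul_add_exp hlam (D ω) a)
    _ = a + C * (∫ ω, Real.exp (lam * D ω) ∂μ + ∫ ω, Real.exp (-lam * D ω) ∂μ) := by
        rw [integral_add (integrable_const a) (hcosh.const_mul C),
          integral_const_mul, integral_add (hint lam) (hint (-lam))]
        simp
    _ ≤ a + C * (Real.exp (lam ^ 2 * v) + Real.exp (lam ^ 2 * v)) := by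
        have h := hmgf (-lam)
        rw [neg_sq] at h
        gcongr
        exact hmgf lam
    _ = a + 2 * Real.exp (lam ^ 2 * v - lam * a - 1) / lam := by
        simp only [C, sub_eq_add_neg (lam ^ 2 * v), Real.exp_add, add_sub_assoc]
        ring

end SubGaussianSum

lemma two_mul_exp_div_sqrt_le_inv {x y n : ℝ} (hx : 2 ≤ x) (hy : 2 ≤ y) (hn : 1 ≤ n) :
    2 * Real.exp (√(n * Real.log (x * y)) ^ 2 * (2 / n)
      - √(n * Real.log (x * y)) * (2 * √(4 * Real.log (x * y) / n)) - 1)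
      / √(n * Real.log (x * y)) ≤ 1 / x := by
  set L := Real.log (x * y)
  have hxy : 0 < x * y := by positivity
  have hL : 1 ≤ L := by
    rw [Real.le_log_iff_exp_le hxy]
    nlinarith [Real.exp_one_lt_d9]
  have hlam : 1 ≤ √(n * L) := Real.one_le_sqrt.2 (by nlinarith)
  have hprod : √(n * L) * √(4 * L / n) = 2 * L := by
    rw [← Real.sqrt_mul (by positivity), show n * L * (4 * L / n) = (2 * L) ^ 2 by field_simp; ring,
      Real.sqrt_sq (by positivity)]
  have hexp : Real.exp (√(n * L) ^ 2 * (2 / n) - √(n * L) * (2 * √(4 * L / n)) - 1)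
      ≤ ((x * y) ^ 2)⁻¹ :=
    calc _ ≤ Real.exp (-(L + L)) := by
          rw [Real.exp_le_exp, Real.sq_sqrt (by positivity), mul_left_comm, hprod]
          field_simp
          linarith
      _ = ((x * y) ^ 2)⁻¹ := by rw [Real.exp_neg, Real.exp_add, Real.exp_log hxy, sq]
  calc 2 * Real.exp (√(n * L) ^ 2 * (2 / n) - √(n * L) * (2 * √(4 * L / n)) - 1) / √(n * L)
      ≤ 2 * ((x * y) ^ 2)⁻¹ / 1 := by gcongr
    _ ≤ 1 / x := by
        rw [div_one, ← div_eq_mul_inv, div_le_div_iff₀ (by positivity) (by positivity)]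
        have hxy2 : 8 ≤ x * y ^ 2 := by nlinarith
        nlinarith

lemma div_le_card_filter_range_mod_eq {T M j : ℕ} (hj : j < M) :
    T / M ≤ #{t ∈ range T | t % M = j} := by
  have h := Nat.count_modEq_card T (j.zero_le.trans_lt hj) j
  rw [Nat.count_eq_card_filter_range] at h
  simp only [Nat.ModEq, Nat.mod_eq_of_lt hj] at h
  omega

lemma ate_eq_mS_sub_mS {N K : ℕ} {E : Type} [DecidableEq E] (ν : BanditInstance N K)
    (Smap : Fin N → SuperArm N K → E) (Si Sj : Fin N → E) :
    ate ν Smap Si Sj = mS ν Smap Si - mS ν Smap Sj := by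
  simp only [ate, mS, sum_sub_distrib, mul_sub]

namespace UCBTSN

variable {N K nc : ℕ} {E : Type} [Fintype E] [DecidableEq E] [MeasurableSpace E]
  {Ω : Type} [MeasurableSpace Ω] (R : UCBTSN N K nc E Ω)

abbrev numArms : ℕ := (UE R.Smap R.Cl).card

/-- During exploration `R.enum (t % R.numArms)` is the arm played at round `t`, so this is the
reward of round `t` centred at its conditional mean. -/
noncomputable def centeredReward (t : ℕ) (ω : Ω) : ℝ :=
  avgRew R.r t ω - mS R.ν R.Smap (R.enum (t % R.numArms))

def visits (j : ℕ) : ℕ := #{t ∈ range R.T1 | t % R.numArms = j}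

/-- The coefficient of round `t` in the exploration-phase empirical mean of `R.enum j`. -/
noncomputable def weight (j t : ℕ) : ℝ := if t % R.numArms = j then (R.visits j : ℝ)⁻¹ else 0

lemma div_le_visits {j : ℕ} (hj : j < R.numArms) : R.T1 / R.numArms ≤ R.visits j :=
  div_le_card_filter_range_mod_eq hj

lemma filter_sel_eq_enum {j : ℕ} (hj : j < R.numArms) (ω : Ω) :
    {τ ∈ range R.T1 | R.Sel τ ω = R.enum j} = {t ∈ range R.T1 | t % R.numArms = j} := by
  refine filter_congr fun t ht => ?_
  rw [R.phase1 t (mem_range.1 ht) ω]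
  exact ⟨R.enum_inj _ _ (Nat.mod_lt _ (j.zero_le.trans_lt hj)) hj, fun h => h ▸ rfl⟩

lemma empMean_enum_sub_mS {j : ℕ} (hj : j < R.numArms) (hvis : R.visits j ≠ 0) (ω : Ω) :
    empMean R.Sel R.r R.T1 (R.enum j) ω - mS R.ν R.Smap (R.enum j)
      = ∑ t ∈ range R.T1, R.weight j t * R.centeredReward t ω := by
  have hterm : ∀ t ∈ {t ∈ range R.T1 | t % R.numArms = j},
      (R.visits j : ℝ)⁻¹ * R.centeredReward t ω
        = (R.visits j : ℝ)⁻¹ * avgRew R.r t ω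
          - (R.visits j : ℝ)⁻¹ * mS R.ν R.Smap (R.enum j) := by
    intro t ht
    rw [centeredReward, (mem_filter.1 ht).2, mul_sub]
  simp only [weight, ite_mul, zero_mul]
  rw [← sum_filter, sum_congr rfl hterm, sum_sub_distrib, ← mul_sum, sum_const, nsmul_eq_mul,
    empMean, cnt, R.filter_sel_eq_enum hj]
  change _ / (R.visits j : ℝ) - _ = _ - (R.visits j : ℝ) * _
  field_simp

lemma dHat_enum_sub_ate {i j : ℕ} (hi : i < R.numArms) (hj : j < R.numArms)
    (hvis_i : R.visits i ≠ 0) (hvis_j : R.visits j ≠ 0) (ω : Ω) :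
    R.dHat (R.enum i) (R.enum j) ω - ate R.ν R.Smap (R.enum i) (R.enum j)
      = ∑ t ∈ range R.T1, (R.weight i t - R.weight j t) * R.centeredReward t ω := by
  simp only [sub_mul, sum_sub_distrib, ← R.empMean_enum_sub_mS hi hvis_i,
    ← R.empMean_enum_sub_mS hj hvis_j, dHat, ate_eq_mS_sub_mS]
  ring

lemma sum_weight_sq (j : ℕ) : ∑ t ∈ range R.T1, R.weight j t ^ 2 = (R.visits j : ℝ)⁻¹ := by
  simp only [weight, ite_pow, zero_pow two_ne_zero, ← sum_filter, sum_const, nsmul_eq_mul]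
  change (R.visits j : ℝ) * _ = _
  rw [sq, ← mul_assoc]
  rcases eq_or_ne (R.visits j : ℝ) 0 with h | h
  · simp [h]
  · rw [mul_inv_cancel₀ h, one_mul]

lemma sum_sq_weight_sub_weight {i j : ℕ} (hij : i ≠ j) :
    ∑ t ∈ range R.T1, (R.weight i t - R.weight j t) ^ 2
      = (R.visits i : ℝ)⁻¹ + (R.visits j : ℝ)⁻¹ := by
  have hdisj : ∀ t, R.weight i t * R.weight j t = 0 := fun t => by
    simp only [weight]
    split_ifs with hi hj
    · exact absurd (hi.symm.trans hj) hij
    all_goals simp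
  simp only [sub_sq, mul_assoc, hdisj, mul_zero, sub_zero, sum_add_distrib, sum_weight_sq]

lemma history_le (t : ℕ) :
    histσ R.Sel R.r t ⊔ MeasurableSpace.comap (R.Sel t) inferInstance ≤ ‹MeasurableSpace Ω› :=
  sup_le (iSup₂_le fun τ _ =>
      ((R.meas_Sel τ).prodMk (measurable_pi_lambda _ fun i => R.meas_r τ i)).comap_le)
    (R.meas_Sel t).comap_le

lemma measurable_centeredReward {τ t : ℕ} (hτ : τ < t) :
    Measurable[histσ R.Sel R.r t ⊔ MeasurableSpace.comap (R.Sel t) inferInstance]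
      (R.centeredReward τ) := by
  have hround : Measurable[histσ R.Sel R.r t]
      (fun ω => (R.Sel τ ω, fun i => R.r τ i ω)) :=
    Measurable.of_comap_le <| le_iSup₂ (f := fun τ (_ : τ ∈ range t) =>
      MeasurableSpace.comap (fun ω => (R.Sel τ ω, fun i => R.r τ i ω)) inferInstance) τ
      (mem_range.2 hτ)
  have havg : Measurable fun p : (Fin N → E) × (Fin N → ℝ) => (1 / (N : ℝ)) * ∑ i, p.2 i :=
    measurable_const.mul <| Finset.measurable_sum _ fun i _ =>
      (measurable_pi_apply i).comp measurable_snd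
  exact ((havg.comp hround).sub measurable_const).mono le_sup_left le_rfl

lemma integrable_exp_mul_centeredReward (t : ℕ) (m : ℝ) :
    Integrable (fun ω => Real.exp (m * R.centeredReward t ω)) R.μ :=
  ((R.int_exp t m).mul_const (Real.exp (-(m * mS R.ν R.Smap (R.enum (t % R.numArms)))))).congr
    (.of_forall fun ω => by simp only [centeredReward, ← Real.exp_add]; ring_nf)

lemma condExp_exp_mul_centeredReward_le {t : ℕ} (ht : t < R.T1) (m : ℝ) :
    R.μ[fun ω => Real.exp (m * R.centeredReward t ω) |
        histσ R.Sel R.r t ⊔ MeasurableSpace.comap (R.Sel t) inferInstance]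
      ≤ᵐ[R.μ] fun _ => Real.exp (m ^ 2) := by
  have hplayed : (fun ω => Real.exp (m * (avgRew R.r t ω - mS R.ν R.Smap (R.Sel t ω))))
      = fun ω => Real.exp (m * R.centeredReward t ω) := by
    funext ω
    rw [R.phase1 t ht ω, centeredReward]
  rw [← hplayed]
  exact R.subG t (ht.trans_le R.hT1T) m

lemma integral_exp_sum_mul_centeredReward_le (c : ℕ → ℝ) :
    ∫ ω, Real.exp (∑ t ∈ range R.T1, c t * R.centeredReward t ω) ∂(R.μ)
      ≤ Real.exp (∑ t ∈ range R.T1, c t ^ 2) := by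
  have := R.μ_prob
  simpa only [one_mul] using integral_exp_sum_mul_le (s := 1) R.history_le
    (fun _ _ => R.measurable_centeredReward) R.integrable_exp_mul_centeredReward
    (fun t ht m => by simpa only [one_mul] using R.condExp_exp_mul_centeredReward_le ht m) c

lemma visits_ne_zero {j : ℕ} (hj : j < R.numArms) (hT1 : R.numArms ≤ R.T1) : R.visits j ≠ 0 :=
  Nat.one_le_iff_ne_zero.1 <|
    ((Nat.one_le_div_iff (j.zero_le.trans_lt hj)).2 hT1).trans (R.div_le_visits hj)

lemma mul_dHat_enum_sub_ate {i j : ℕ} (hi : i < R.numArms) (hj : j < R.numArms)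
    (hT1 : R.numArms ≤ R.T1) (θ : ℝ) (ω : Ω) :
    θ * (R.dHat (R.enum i) (R.enum j) ω - ate R.ν R.Smap (R.enum i) (R.enum j))
      = ∑ t ∈ range R.T1, θ * (R.weight i t - R.weight j t) * R.centeredReward t ω := by
  rw [R.dHat_enum_sub_ate hi hj (R.visits_ne_zero hi hT1) (R.visits_ne_zero hj hT1), mul_sum]
  simp only [mul_assoc]

lemma integrable_exp_mul_dHat_enum_sub_ate {i j : ℕ} (hi : i < R.numArms) (hj : j < R.numArms)
    (hT1 : R.numArms ≤ R.T1) (θ : ℝ) :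
    Integrable (fun ω => Real.exp
      (θ * (R.dHat (R.enum i) (R.enum j) ω - ate R.ν R.Smap (R.enum i) (R.enum j)))) R.μ := by
  have := R.μ_prob
  simp only [R.mul_dHat_enum_sub_ate hi hj hT1]
  exact integrable_exp_sum_mul R.history_le (fun _ _ => R.measurable_centeredReward)
    R.integrable_exp_mul_centeredReward _ _

lemma integral_exp_mul_dHat_enum_sub_ate_le {i j : ℕ} (hi : i < R.numArms) (hj : j < R.numArms)
    (hij : i ≠ j) (hT1 : R.numArms ≤ R.T1) (θ : ℝ) :
    ∫ ω, Real.exp (θ * (R.dHat (R.enum i) (R.enum j) ω - ate R.ν R.Smap (R.enum i) (R.enum j)))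
        ∂(R.μ) ≤ Real.exp (θ ^ 2 * (2 / ((R.T1 / R.numArms : ℕ) : ℝ))) := by
  simp only [R.mul_dHat_enum_sub_ate hi hj hT1]
  refine (R.integral_exp_sum_mul_centeredReward_le _).trans (Real.exp_le_exp.2 ?_)
  have hn : (0 : ℝ) < (R.T1 / R.numArms : ℕ) := by
    exact_mod_cast (Nat.one_le_div_iff (i.zero_le.trans_lt hi)).2 hT1
  have hinv : ∀ {k}, k < R.numArms → (R.visits k : ℝ)⁻¹ ≤ ((R.T1 / R.numArms : ℕ) : ℝ)⁻¹ :=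
    fun hk => inv_anti₀ hn (by exact_mod_cast R.div_le_visits hk)
  simp only [mul_pow, ← mul_sum, R.sum_sq_weight_sub_weight hij]
  gcongr
  linarith [hinv hi, hinv hj, div_eq_mul_inv (2 : ℝ) ((R.T1 / R.numArms : ℕ) : ℝ)]

end UCBTSN

/-- **Theorem 3 (ATE estimation upper bound of UCB-TSN).**  Under Condition 1, if the
exploration length satisfies `T1 ≥ |U_E|`, then for all `S_i ≠ S_j ∈ U_E` the ATE
estimator of UCB-TSN satisfies
`E[|Δ̂_T^{(i,j)} − Δ^{(i,j)}|] ≤ 2 √(4 log(T1 |U_E|) / ⌊T1/|U_E|⌋) + 1/T1`;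
in particular `E[|Δ̂_T^{(i,j)} − Δ^{(i,j)}|] = Õ(√(|U_E|/T1))`. -/
theorem ucb_tsn_ate_upper_bound
    {N K nc : ℕ} {E : Type} [Fintype E] [DecidableEq E] [MeasurableSpace E]
    {Ω : Type} [MeasurableSpace Ω]
    (R : UCBTSN N K nc E Ω)
    (hT1 : (UE R.Smap R.Cl).card ≤ R.T1) :
    ∀ Si ∈ UE R.Smap R.Cl, ∀ Sj ∈ UE R.Smap R.Cl, Si ≠ Sj →
      MeasureTheory.integral R.μ (fun ω => |R.dHat Si Sj ω - ate R.ν R.Smap Si Sj|) ≤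
        2 * Real.sqrt (4 * Real.log ((R.T1 : ℝ) * ((UE R.Smap R.Cl).card : ℝ))
              / ((R.T1 / (UE R.Smap R.Cl).card : ℕ) : ℝ))
          + 1 / (R.T1 : ℝ) := by
  intro Si hSi Sj hSj hne
  obtain ⟨i, hi, rfl⟩ := (R.enum_mem Si).1 hSi
  obtain ⟨j, hj, rfl⟩ := (R.enum_mem Sj).1 hSj
  have := R.μ_prob
  have hM : (2 : ℝ) ≤ R.numArms := by exact_mod_cast R.cond1_lo
  have hT : (2 : ℝ) ≤ R.T1 := hM.trans (by exact_mod_cast hT1)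
  have hn : (1 : ℝ) ≤ (R.T1 / R.numArms : ℕ) := by
    exact_mod_cast (Nat.one_le_div_iff (i.zero_le.trans_lt hi)).2 hT1
  have hlam : 0 < √((R.T1 / R.numArms : ℕ) * Real.log (R.T1 * R.numArms)) :=
    Real.sqrt_pos.2 (mul_pos (by linarith) (Real.log_pos (by nlinarith)))
  calc _ ≤ _ := integral_abs_le_of_integral_exp_le _ hlam
        (R.integrable_exp_mul_dHat_enum_sub_ate hi hj hT1)
        (R.integral_exp_mul_dHat_enum_sub_ate_le hi hj (fun h => hne (h ▸ rfl)) hT1)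
    _ ≤ _ := add_le_add_right (two_mul_exp_div_sqrt_le_inv hT hM hn) _

end MABN
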